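/- arXiv:1705.02627 — 3 statements merged into one kernel-verified Lean document; each statement's English description precedes it below -/
import Mathlib

section
/- Let Q_x, Q_y be d×d symmetric positive definite matrices with decomposition Q_y^{1/2} Q_x Q_y^{1/2} = U Λ Uᵀ (U orthogonal, Λ diagonal with positive entries). For λ > 0 define q_i = min(1/λ, Λ_ii) and Q = Q_y^{-1/2} U diag(q₁,…,q_d) Uᵀ Q_y^{-1/2}. Then Q satisfies tr(Q Q_y) = Σ_i q_i and 0 ⪯ Q ⪯ Q_x. -/
open Matrix

open scoped ComplexOrder in
/-- The square root of a positive semidefinite matrix, as formerly defined in Mathlib. -/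
noncomputable def Matrix.PosSemidef.sqrt {n 𝕜 : Type*} [Fintype n] [RCLike 𝕜] [DecidableEq n]
    {A : Matrix n n 𝕜} (hA : A.PosSemidef) : Matrix n n 𝕜 :=
  hA.1.eigenvectorUnitary.1 * diagonal ((↑) ∘ Real.sqrt ∘ hA.1.eigenvalues) *
  (star hA.1.eigenvectorUnitary : Matrix n n 𝕜)

/-
With `S = Q_y^{1/2}` and `T = S⁻¹ U` we have `Q_x = T Λ Tᵀ`, `Q = T diag(q) Tᵀ` and
`Tᵀ Q_y T = Uᵀ U = 1`. So `tr (Q Q_y) = tr (diag q)`, and `Q` and `Q_x - Q = T diag(Λ - q) Tᵀ`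
are congruences of nonnegative diagonal matrices, as `0 ≤ q_i ≤ Λ_i`.
-/

namespace Matrix

section Sqrt

open scoped ComplexOrder

variable {n 𝕜 : Type*} [Fintype n] [DecidableEq n] [RCLike 𝕜] {A : Matrix n n 𝕜}

theorem PosSemidef.sqrt_mul_self (hA : A.PosSemidef) : hA.sqrt * hA.sqrt = A := by
  set V := hA.1.eigenvectorUnitary
  set D : Matrix n n 𝕜 := diagonal ((↑) ∘ Real.sqrt ∘ hA.1.eigenvalues)
  have hDD : D * D = diagonal ((↑) ∘ hA.1.eigenvalues) := by
    simp only [D, diagonal_mul_diagonal, Function.comp_apply, ← RCLike.ofReal_mul,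
      Real.mul_self_sqrt (hA.eigenvalues_nonneg _)]
    rfl
  calc hA.sqrt * hA.sqrt = V.1 * (D * ((star V : Matrix n n 𝕜) * V.1) * D) * star V.1 := by
        simp only [PosSemidef.sqrt, D, Matrix.mul_assoc]; rfl
    _ = A := by
      rw [Unitary.coe_star_mul_self, Matrix.mul_one, hDD]
      conv_rhs => rw [hA.1.spectral_theorem, Unitary.conjStarAlgAut_apply]

theorem PosSemidef.conjTranspose_sqrt (hA : A.PosSemidef) : hA.sqrtᴴ = hA.sqrt := by
  simp [PosSemidef.sqrt, star_eq_conjTranspose, Matrix.mul_assoc, Pi.star_def,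
    Function.comp_def]

theorem PosDef.isUnit_det_sqrt (hA : A.PosDef) : IsUnit hA.posSemidef.sqrt.det := by
  have h : IsUnit (hA.posSemidef.sqrt.det * hA.posSemidef.sqrt.det) := by
    rw [← det_mul, hA.posSemidef.sqrt_mul_self]
    exact (isUnit_iff_isUnit_det A).mp hA.isUnit
  exact isUnit_of_mul_isUnit_left h

end Sqrt

variable {n : Type*} [Fintype n] [DecidableEq n]

theorem posSemidef_mul_diagonal_mul_transpose {m : Type*} [Fintype m] (T : Matrix m n ℝ)
    {v : n → ℝ} (hv : ∀ i, 0 ≤ v i) : (T * diagonal v * Tᵀ).PosSemidef := by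
  simpa using (posSemidef_diagonal_iff.mpr hv).mul_mul_conjTranspose_same T

theorem trace_mul_diagonal_mul_transpose_mul {R : Type*} [CommSemiring R] {T A : Matrix n n R}
    (hT : Tᵀ * A * T = 1) (v : n → R) : (T * diagonal v * Tᵀ * A).trace = ∑ i, v i := by
  rw [Matrix.mul_assoc (T * diagonal v), trace_mul_comm, ← Matrix.mul_assoc, hT, Matrix.one_mul,
    trace_diagonal]

end Matrix

theorem stmt3_general (d : ℕ) (Qx Qy : Matrix (Fin d) (Fin d) ℝ)
    (hQy : Qy.PosDef)
    (U : Matrix (Fin d) (Fin d) ℝ) (hU : Uᵀ * U = 1)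
    (Λ : Fin d → ℝ) (hΛpos : ∀ i, 0 < Λ i)
    (hdecomp : hQy.posSemidef.sqrt * Qx * hQy.posSemidef.sqrt
      = U * Matrix.diagonal Λ * Uᵀ)
    (lam : ℝ) (hlam : 0 < lam)
    (q : Fin d → ℝ) (hq : ∀ i, q i = min (1 / lam) (Λ i))
    (Q : Matrix (Fin d) (Fin d) ℝ)
    (hQ : Q = hQy.posSemidef.sqrt⁻¹ * U * Matrix.diagonal q * Uᵀ *
      hQy.posSemidef.sqrt⁻¹) :
    (Q * Qy).trace = ∑ i, q i ∧ Q.PosSemidef ∧ (Qx - Q).PosSemidef := by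
  set S := hQy.posSemidef.sqrt
  have hS : IsUnit S.det := hQy.isUnit_det_sqrt
  set T := S⁻¹ * U
  have hSt : Sᵀ = S := by
    rw [← conjTranspose_eq_transpose_of_trivial]
    exact hQy.posSemidef.conjTranspose_sqrt
  have hTt : Tᵀ = Uᵀ * S⁻¹ := by rw [transpose_mul, transpose_nonsing_inv, hSt]
  have hQT : Q = T * diagonal q * Tᵀ := by simp only [hQ, hTt, T, Matrix.mul_assoc]
  have hQxT : Qx = T * diagonal Λ * Tᵀ := calc
    Qx = S⁻¹ * (S * Qx * S) * S⁻¹ := by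
      simp only [Matrix.mul_assoc, nonsing_inv_mul_cancel_left _ _ hS, mul_nonsing_inv _ hS,
        Matrix.mul_one]
    _ = T * diagonal Λ * Tᵀ := by simp only [hdecomp, hTt, T, Matrix.mul_assoc]
  have hTQy : Tᵀ * Qy * T = 1 := by
    rw [hTt, ← show S * S = Qy from hQy.posSemidef.sqrt_mul_self]
    simp only [T, Matrix.mul_assoc, nonsing_inv_mul_cancel_left _ _ hS,
      mul_nonsing_inv_cancel_left _ _ hS, hU]
  have hq_nonneg : ∀ i, 0 ≤ q i := fun i => hq i ▸ le_min (by positivity) (hΛpos i).le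
  have hq_le_Λ : ∀ i, 0 ≤ Λ i - q i := fun i => sub_nonneg.mpr (hq i ▸ min_le_right _ _)
  refine ⟨hQT ▸ trace_mul_diagonal_mul_transpose_mul hTQy q,
    hQT ▸ posSemidef_mul_diagonal_mul_transpose T hq_nonneg, ?_⟩
  rw [hQxT, hQT, ← Matrix.sub_mul, ← Matrix.mul_sub, diagonal_sub]
  exact posSemidef_mul_diagonal_mul_transpose T hq_le_Λ

/-- the reverse water-filling matrix
`Q = Q_y^{-1/2} U diag(q) Uᵀ Q_y^{-1/2}` with `q_i = min (1/λ) Λ_ii`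
satisfies `tr (Q Q_y) = ∑ q_i` and `0 ⪯ Q ⪯ Q_x`. -/
theorem stmt3 (d : ℕ) (Qx Qy : Matrix (Fin d) (Fin d) ℝ)
    (hQx : Qx.PosDef) (hQy : Qy.PosDef)
    (U : Matrix (Fin d) (Fin d) ℝ) (hU : Uᵀ * U = 1)
    (Λ : Fin d → ℝ) (hΛpos : ∀ i, 0 < Λ i)
    (hdecomp : hQy.posSemidef.sqrt * Qx * hQy.posSemidef.sqrt
      = U * Matrix.diagonal Λ * Uᵀ)
    (lam : ℝ) (hlam : 0 < lam)
    (q : Fin d → ℝ) (hq : ∀ i, q i = min (1 / lam) (Λ i))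
    (Q : Matrix (Fin d) (Fin d) ℝ)
    (hQ : Q = hQy.posSemidef.sqrt⁻¹ * U * Matrix.diagonal q * Uᵀ *
      hQy.posSemidef.sqrt⁻¹) :
    (Q * Qy).trace = ∑ i, q i ∧ Q.PosSemidef ∧ (Qx - Q).PosSemidef :=
  stmt3_general d Qx Qy hQy U hU Λ hΛpos hdecomp lam hlam q hq Q hQ
end

section
/- Let Q̃ be an invertible d×d matrix and Λ a diagonal d×d matrix such that (Q̃^{-1} − λ I)(Q̃ − Λ) = 0 for some scalar λ ≠ 0, and suppose Q̃ is symmetric. If the diagonal entries Λ_ii are pairwise distinct and each Λ_ii ≠ 1/λ, then Q̃ is diagonal with each diagonal entry equal to either 1/λ or Λ_ii. -/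
open Matrix

/-- if `Q̃` is symmetric and invertible,
`(Q̃⁻¹ − λ I)(Q̃ − Λ) = 0` with `λ ≠ 0`, `Λ` diagonal with pairwise distinct
diagonal entries each different from `1/λ`, then `Q̃` is diagonal and every
diagonal entry of `Q̃` equals either `1/λ` or the corresponding `Λ_ii`. -/
theorem stmt5 (d : ℕ) (Qt : Matrix (Fin d) (Fin d) ℝ)
    (hQtinv : IsUnit Qt.det) (hQtsym : Qt.IsSymm)
    (lam : ℝ) (hlam : lam ≠ 0)
    (Λ : Fin d → ℝ)
    (hKKT : (Qt⁻¹ - lam • (1 : Matrix (Fin d) (Fin d) ℝ)) *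
      (Qt - Matrix.diagonal Λ) = 0)
    (hdistinct : ∀ i j, i ≠ j → Λ i ≠ Λ j)
    (hne : ∀ i, Λ i ≠ 1 / lam) :
    Qt.IsDiag ∧ ∀ i, Qt i i = 1 / lam ∨ Qt i i = Λ i := by
  set D := Matrix.diagonal Λ with hD
  have hmul : Qt * Qt⁻¹ = 1 := Matrix.mul_nonsing_inv Qt hQtinv
  have h1 : (1 - lam • Qt) * (Qt - D) = 0 := by
    have h : Qt * ((Qt⁻¹ - lam • (1 : Matrix (Fin d) (Fin d) ℝ)) * (Qt - D)) = 0 := by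
      rw [hKKT, Matrix.mul_zero]
    have hx : Qt * (Qt⁻¹ - lam • (1 : Matrix (Fin d) (Fin d) ℝ)) = 1 - lam • Qt := by
      rw [Matrix.mul_sub, hmul, Matrix.mul_smul, Matrix.mul_one]
    rw [← Matrix.mul_assoc, hx] at h
    exact h
  have h2 : (Qt - D) * (1 - lam • Qt) = 0 := by
    have h := congrArg Matrix.transpose h1
    simpa [Matrix.transpose_mul, Matrix.transpose_sub, Matrix.transpose_smul,
      Matrix.transpose_one, hQtsym.eq, hD] using h
  have hA : lam • (Qt * D) = lam • (D * Qt) := by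
    have e : Qt - D - lam • (Qt * Qt) + lam • (Qt * D)
           = Qt - D - lam • (Qt * Qt) + lam • (D * Qt) := by
      calc Qt - D - lam • (Qt * Qt) + lam • (Qt * D)
          = (1 - lam • Qt) * (Qt - D) := by
            rw [sub_mul, mul_sub, mul_sub, one_mul, one_mul, smul_mul_assoc, smul_mul_assoc]
            abel
        _ = 0 := h1
        _ = (Qt - D) * (1 - lam • Qt) := h2.symm
        _ = Qt - D - lam • (Qt * Qt) + lam • (D * Qt) := by
            rw [mul_sub, sub_mul, sub_mul, mul_one, mul_one, mul_smul_comm, mul_smul_comm]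
            abel
    exact add_left_cancel e
  have hcomm : Qt * D = D * Qt := smul_right_injective _ hlam hA
  have hdiag : Qt.IsDiag := by
    intro i j hij
    have h := congrFun (congrFun hcomm i) j
    rw [hD, Matrix.mul_diagonal, Matrix.diagonal_mul] at h
    have hΛ : Λ j - Λ i ≠ 0 := sub_ne_zero.mpr (hdistinct j i (Ne.symm hij))
    have : Qt i j * (Λ j - Λ i) = 0 := by ring_nf; linarith [h]
    exact (mul_eq_zero.mp this).resolve_right hΛ
  refine ⟨hdiag, fun i => ?_⟩
  have e := congrFun (congrFun h1 i) i
  rw [Matrix.mul_apply] at e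
  rw [Finset.sum_eq_single i] at e
  · simp only [Matrix.sub_apply, Matrix.one_apply_eq, Matrix.smul_apply, smul_eq_mul,
      hD, Matrix.diagonal_apply_eq, Matrix.zero_apply] at e
    rcases mul_eq_zero.mp e with h | h
    · left
      field_simp
      linarith [h]
    · right
      linarith [h]
  · intro k _ hk
    have hQ : Qt k i = 0 := hdiag hk
    have hDk : D k i = 0 := Matrix.diagonal_apply_ne Λ hk
    simp [Matrix.sub_apply, hQ, hDk]
  · intro h
    exact absurd (Finset.mem_univ i) h
end

section
/- Let S_x and S_y be d×d symmetric matrices with S_y positive definite, and fix m ≤ d. For x₁,…,x_n ∈ ℝ^d with S_x = (1/n) Σ_i x_i x_iᵀ, consider minimizing D(U, z) = (1/n) Σ_i (x_i − U z_i)ᵀ S_y (x_i − U z_i) over d×m matrices U with UᵀU = I and z_i ∈ ℝ^m. For fixed U, the optimal z_i is z_i = (Uᵀ S_y U)^{-1} Uᵀ S_y x_i, and the resulting value is D(U) = tr(S_x S_y) − tr((Uᵀ S_y U)^{-1} Uᵀ S_y S_x S_y U). -/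
/-!
Write `P = (Uᵀ S U)⁻¹ Uᵀ S` (here `Uᵀ S U` is positive definite, hence invertible, because `U` is
injective). For every sample the residual `r = x - U P x` is `S`-orthogonal to the column space of
`U`, i.e. `Uᵀ S r = 0`, so by Pythagoras in the inner product `⟨a, b⟩ = aᵀ S b` any other
coefficient vector `z` gives `‖x - U z‖²_S = ‖r‖²_S + ‖U (P x - z)‖²_S ≥ ‖r‖²_S`. By the same
orthogonality `‖r‖²_S = xᵀ S x - xᵀ S U P x`, and averaging over the samples turns these quadratic
forms into traces against `S_x`.
-/

open Matrix Finset

namespace Matrix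

variable {ι κ σ R : Type*} [Fintype ι] [Fintype κ] [Fintype σ]

lemma mulVec_injective_of_transpose_mul_self_eq_one [CommSemiring R] [DecidableEq κ]
    {U : Matrix ι κ R} (hU : Uᵀ * U = 1) : Function.Injective U.mulVec :=
  Function.LeftInverse.injective (g := Uᵀ.mulVec) fun v => by
    rw [mulVec_mulVec, hU, one_mulVec]

lemma PosDef.transpose_mul_mul_same {S : Matrix ι ι ℝ} (hS : S.PosDef) {U : Matrix ι κ ℝ}
    (hU : Function.Injective U.mulVec) : (Uᵀ * S * U).PosDef := by
  simpa only [conjTranspose_eq_transpose_of_trivial] using hS.conjTranspose_mul_mul_same hU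

lemma trace_vecMulVec_mul [CommSemiring R] (a b : ι → R) (A : Matrix ι ι R) :
    (vecMulVec a b * A).trace = b ⬝ᵥ (A *ᵥ a) := by
  rw [vecMulVec_mul, trace_vecMulVec, dotProduct_mulVec, dotProduct_comm]

lemma trace_smul_sum_vecMulVec_mul [CommSemiring R] (c : R) (x : σ → ι → R) (A : Matrix ι ι R) :
    ((c • ∑ i, vecMulVec (x i) (x i)) * A).trace = c * ∑ i, x i ⬝ᵥ (A *ᵥ x i) := by
  simp only [Matrix.smul_mul, trace_smul, Finset.sum_mul, trace_sum, trace_vecMulVec_mul,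
    smul_eq_mul]

section Residual

variable [CommRing R] {S : Matrix ι ι R} {U : Matrix ι κ R}

lemma transpose_mulVec_mulVec_sub_eq_zero [DecidableEq κ] (hM : IsUnit (Uᵀ * S * U))
    (x : ι → R) : Uᵀ *ᵥ (S *ᵥ (x - U *ᵥ (((Uᵀ * S * U)⁻¹ * Uᵀ * S) *ᵥ x))) = 0 := by
  have hdet := (isUnit_iff_isUnit_det _).mp hM
  rw [mulVec_sub, mulVec_sub, mulVec_mulVec, mulVec_mulVec, mulVec_mulVec, mulVec_mulVec,
    ← Matrix.mul_assoc, ← Matrix.mul_assoc, mul_nonsing_inv _ hdet, Matrix.one_mul, sub_self]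

lemma dotProduct_mulVec_eq_zero_of_transpose_mulVec_eq_zero {r : ι → R}
    (hr : Uᵀ *ᵥ (S *ᵥ r) = 0) (w : κ → R) : (U *ᵥ w) ⬝ᵥ (S *ᵥ r) = 0 := by
  rw [dotProduct_comm, ← dotProduct_transpose_mulVec, hr, dotProduct_zero]

lemma sub_dotProduct_mulVec_sub_of_orthogonal (hS : Sᵀ = S) {r v : ι → R}
    (hrv : v ⬝ᵥ (S *ᵥ r) = 0) :
    (r - v) ⬝ᵥ (S *ᵥ (r - v)) = r ⬝ᵥ (S *ᵥ r) + v ⬝ᵥ (S *ᵥ v) := by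
  have hvr : r ⬝ᵥ (S *ᵥ v) = 0 := by
    rw [← hS, dotProduct_transpose_mulVec, hrv]
  rw [mulVec_sub, dotProduct_sub, sub_dotProduct, sub_dotProduct, hrv, hvr]
  ring

lemma residual_dotProduct_mulVec_eq {x : ι → R} {z : κ → R}
    (hres : Uᵀ *ᵥ (S *ᵥ (x - U *ᵥ z)) = 0) :
    (x - U *ᵥ z) ⬝ᵥ (S *ᵥ (x - U *ᵥ z)) = x ⬝ᵥ (S *ᵥ x) - x ⬝ᵥ (S *ᵥ (U *ᵥ z)) := by
  rw [sub_dotProduct, dotProduct_mulVec_eq_zero_of_transpose_mulVec_eq_zero hres, sub_zero,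
    mulVec_sub, dotProduct_sub]

end Residual

lemma PosSemidef.residual_dotProduct_mulVec_le {S : Matrix ι ι ℝ} (hS : S.PosSemidef)
    {U : Matrix ι κ ℝ} {x : ι → ℝ} {z₀ : κ → ℝ} (hres : Uᵀ *ᵥ (S *ᵥ (x - U *ᵥ z₀)) = 0)
    (z : κ → ℝ) :
    (x - U *ᵥ z₀) ⬝ᵥ (S *ᵥ (x - U *ᵥ z₀)) ≤ (x - U *ᵥ z) ⬝ᵥ (S *ᵥ (x - U *ᵥ z)) := by
  have hsplit : x - U *ᵥ z = (x - U *ᵥ z₀) - U *ᵥ (z - z₀) := by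
    rw [mulVec_sub]; abel
  rw [hsplit, sub_dotProduct_mulVec_sub_of_orthogonal (S := S) hS.1
    (dotProduct_mulVec_eq_zero_of_transpose_mulVec_eq_zero hres _)]
  have hnonneg := hS.dotProduct_mulVec_nonneg (U *ᵥ (z - z₀))
  rw [star_trivial] at hnonneg
  exact le_add_of_nonneg_right hnonneg

end Matrix

theorem stmt9_general (d m n : ℕ)
    (Sy : Matrix (Fin d) (Fin d) ℝ) (hSy : Sy.PosDef)
    (U : Matrix (Fin d) (Fin m) ℝ) (hU : Uᵀ * U = 1)
    (x : Fin n → Fin d → ℝ)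
    (Sx : Matrix (Fin d) (Fin d) ℝ)
    (hSx : Sx = (1 / (n : ℝ)) • ∑ i : Fin n, vecMulVec (x i) (x i))
    (zopt : Fin n → Fin m → ℝ)
    (hzopt : ∀ i, zopt i = ((Uᵀ * Sy * U)⁻¹ * Uᵀ * Sy) *ᵥ x i) :
    (∀ z : Fin n → Fin m → ℝ,
      (1 / (n : ℝ)) * ∑ i : Fin n,
          (x i - U *ᵥ zopt i) ⬝ᵥ (Sy *ᵥ (x i - U *ᵥ zopt i)) ≤
        (1 / (n : ℝ)) * ∑ i : Fin n,
          (x i - U *ᵥ z i) ⬝ᵥ (Sy *ᵥ (x i - U *ᵥ z i))) ∧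
    (1 / (n : ℝ)) * ∑ i : Fin n,
        (x i - U *ᵥ zopt i) ⬝ᵥ (Sy *ᵥ (x i - U *ᵥ zopt i))
      = (Sx * Sy).trace - ((Uᵀ * Sy * U)⁻¹ * Uᵀ * Sy * Sx * Sy * U).trace := by
  set P := (Uᵀ * Sy * U)⁻¹ * Uᵀ * Sy
  have hM := hSy.transpose_mul_mul_same (mulVec_injective_of_transpose_mul_self_eq_one hU)
  have hres (i : Fin n) : Uᵀ *ᵥ (Sy *ᵥ (x i - U *ᵥ zopt i)) = 0 := by
    rw [hzopt i]; exact transpose_mulVec_mulVec_sub_eq_zero hM.isUnit (x i)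
  refine ⟨fun z => ?_, ?_⟩
  · gcongr with i
    exact hSy.posSemidef.residual_dotProduct_mulVec_le (hres i) (z i)
  have htrace : (P * Sx * Sy * U).trace = (Sx * (Sy * U * P)).trace := by
    rw [Matrix.mul_assoc (P * Sx), trace_mul_comm, ← Matrix.mul_assoc, trace_mul_comm]
  rw [htrace, hSx, trace_smul_sum_vecMulVec_mul, trace_smul_sum_vecMulVec_mul, ← mul_sub,
    ← sum_sub_distrib]
  congr 1
  refine sum_congr rfl fun i _ => ?_
  rw [residual_dotProduct_mulVec_eq (hres i), hzopt i, mulVec_mulVec, mulVec_mulVec,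
    Matrix.mul_assoc]

/-- for a fixed `U` with orthonormal columns and `S_y ≻ 0`, the
coefficients `z_i = (Uᵀ S_y U)⁻¹ Uᵀ S_y x_i` minimize the distortion
`D(U,z) = (1/n) ∑ᵢ (xᵢ − U zᵢ)ᵀ S_y (xᵢ − U zᵢ)` and the minimum value is
`tr(S_x S_y) − tr((Uᵀ S_y U)⁻¹ Uᵀ S_y S_x S_y U)` with
`S_x = (1/n) ∑ xᵢ xᵢᵀ`. -/
theorem stmt9 (d m n : ℕ) (hn : 0 < n)
    (Sy : Matrix (Fin d) (Fin d) ℝ) (hSy : Sy.PosDef)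
    (U : Matrix (Fin d) (Fin m) ℝ) (hU : Uᵀ * U = 1)
    (x : Fin n → Fin d → ℝ)
    (Sx : Matrix (Fin d) (Fin d) ℝ)
    (hSx : Sx = (1 / (n : ℝ)) • ∑ i : Fin n, vecMulVec (x i) (x i))
    (zopt : Fin n → Fin m → ℝ)
    (hzopt : ∀ i, zopt i = ((Uᵀ * Sy * U)⁻¹ * Uᵀ * Sy) *ᵥ x i) :
    (∀ z : Fin n → Fin m → ℝ,
      (1 / (n : ℝ)) * ∑ i : Fin n,
          (x i - U *ᵥ zopt i) ⬝ᵥ (Sy *ᵥ (x i - U *ᵥ zopt i)) ≤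
        (1 / (n : ℝ)) * ∑ i : Fin n,
          (x i - U *ᵥ z i) ⬝ᵥ (Sy *ᵥ (x i - U *ᵥ z i))) ∧
    (1 / (n : ℝ)) * ∑ i : Fin n,
        (x i - U *ᵥ zopt i) ⬝ᵥ (Sy *ᵥ (x i - U *ᵥ zopt i))
      = (Sx * Sy).trace - ((Uᵀ * Sy * U)⁻¹ * Uᵀ * Sy * Sx * Sy * U).trace :=
  stmt9_general d m n Sy hSy U hU x Sx hSx zopt hzopt
end
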